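/- arXiv:2501.03032 — 4 statements merged into one kernel-verified Lean document; each statement's English description precedes it below -/
import Mathlib

section
/- Let n ≥ 1 and let R̂ : (Fin n)⁴ → ℂ be a tensor satisfying the symmetries R̂(i,j,k,ℓ) = R̂(k,j,i,ℓ), R̂(i,j,k,ℓ) = R̂(i,ℓ,k,j), and R̂(i,j,k,ℓ) = conj(R̂(j,i,ℓ,k)). If there is a real constant c such that for every X ∈ ℂⁿ one has Σ_{i,j,k,ℓ} R̂(i,j,k,ℓ)·X_i·conj(X_j)·X_k·conj(X_ℓ) = c·(Σ_i |X_i|²)², then R̂(i,j,k,ℓ) = (c/2)·(δ_{ij}·δ_{kℓ} + δ_{iℓ}·δ_{kj}) for all i,j,k,ℓ. -/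
open Complex

private noncomputable def polcS4 {n : ℕ} (D : Fin n → Fin n → Fin n → Fin n → ℂ)
    (A B C E : Fin n → ℂ) : ℂ :=
  ∑ i, ∑ j, ∑ k, ∑ l, D i j k l * A i * (starRingEnd ℂ) (B j) * C k * (starRingEnd ℂ) (E l)

private lemma polcS4_basis {n : ℕ} (D : Fin n → Fin n → Fin n → Fin n → ℂ) (a b c d : Fin n) :
    polcS4 D (fun m => if m = a then (1:ℂ) else 0) (fun m => if m = b then (1:ℂ) else 0)
      (fun m => if m = c then (1:ℂ) else 0) (fun m => if m = d then (1:ℂ) else 0)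
      = D a b c d := by
  simp [polcS4, apply_ite (starRingEnd ℂ), mul_ite, ite_mul, Finset.sum_ite_eq']

private lemma polc_stageA {n : ℕ} (D : Fin n → Fin n → Fin n → Fin n → ℂ)
    (h0 : ∀ X : Fin n → ℂ, polcS4 D X X X X = 0) (X Y : Fin n → ℂ) :
    polcS4 D X X Y Y + polcS4 D X Y Y X + polcS4 D Y X X Y + polcS4 D Y Y X X = 0 := by
  have h1 := h0 (fun m => X m + Y m)
  have h2 := h0 (fun m => X m + Complex.I * Y m)
  have h3 := h0 (fun m => X m - Y m)
  have h4 := h0 (fun m => X m - Complex.I * Y m)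
  have hx := h0 X
  have hy := h0 Y
  have expand : polcS4 D (fun m => X m + Y m) (fun m => X m + Y m) (fun m => X m + Y m) (fun m => X m + Y m)
      + polcS4 D (fun m => X m + Complex.I * Y m) (fun m => X m + Complex.I * Y m) (fun m => X m + Complex.I * Y m) (fun m => X m + Complex.I * Y m)
      + polcS4 D (fun m => X m - Y m) (fun m => X m - Y m) (fun m => X m - Y m) (fun m => X m - Y m)
      + polcS4 D (fun m => X m - Complex.I * Y m) (fun m => X m - Complex.I * Y m) (fun m => X m - Complex.I * Y m) (fun m => X m - Complex.I * Y m)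
      = 4 * (polcS4 D X X X X + polcS4 D Y Y Y Y
          + (polcS4 D X X Y Y + polcS4 D X Y Y X + polcS4 D Y X X Y + polcS4 D Y Y X X)) := by
    simp only [polcS4, Finset.mul_sum, ← Finset.sum_add_distrib]
    refine Finset.sum_congr rfl fun i _ => ?_
    refine Finset.sum_congr rfl fun j _ => ?_
    refine Finset.sum_congr rfl fun k _ => ?_
    refine Finset.sum_congr rfl fun l _ => ?_
    simp only [map_add, map_mul, map_sub, Complex.conj_I]
    linear_combination (2*(D i j k l)*((Complex.I*Complex.I-1)*((Y i)*((starRingEnd ℂ) (Y j))*(Y k)*((starRingEnd ℂ) (Y l)))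
      + (Y i)*((starRingEnd ℂ) (X j))*(Y k)*((starRingEnd ℂ) (X l))
      + (X i)*((starRingEnd ℂ) (Y j))*(X k)*((starRingEnd ℂ) (Y l))
      - (Y i)*((starRingEnd ℂ) (Y j))*(X k)*((starRingEnd ℂ) (X l))
      - (Y i)*((starRingEnd ℂ) (X j))*(X k)*((starRingEnd ℂ) (Y l))
      - (X i)*((starRingEnd ℂ) (Y j))*(Y k)*((starRingEnd ℂ) (X l))
      - (X i)*((starRingEnd ℂ) (X j))*(Y k)*((starRingEnd ℂ) (Y l)))) * Complex.I_mul_I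
  linear_combination (h1 + h2 + h3 + h4) / 4 - expand / 4 - hx - hy

private lemma polc_stageB {n : ℕ} (D : Fin n → Fin n → Fin n → Fin n → ℂ)
    (hA : ∀ X Y : Fin n → ℂ,
      polcS4 D X X Y Y + polcS4 D X Y Y X + polcS4 D Y X X Y + polcS4 D Y Y X X = 0)
    (U V Y : Fin n → ℂ) :
    polcS4 D U V Y Y + polcS4 D U Y Y V + polcS4 D Y V U Y + polcS4 D Y Y U V = 0 := by
  have g1 := hA (fun m => U m + V m) Y
  have g2 := hA (fun m => U m + Complex.I * V m) Y
  have g3 := hA (fun m => U m - V m) Y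
  have g4 := hA (fun m => U m - Complex.I * V m) Y
  have expand :
      (polcS4 D (fun m => U m + V m) (fun m => U m + V m) Y Y
        + polcS4 D (fun m => U m + V m) Y Y (fun m => U m + V m)
        + polcS4 D Y (fun m => U m + V m) (fun m => U m + V m) Y
        + polcS4 D Y Y (fun m => U m + V m) (fun m => U m + V m))
      + Complex.I * (polcS4 D (fun m => U m + Complex.I * V m) (fun m => U m + Complex.I * V m) Y Y
        + polcS4 D (fun m => U m + Complex.I * V m) Y Y (fun m => U m + Complex.I * V m)
        + polcS4 D Y (fun m => U m + Complex.I * V m) (fun m => U m + Complex.I * V m) Y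
        + polcS4 D Y Y (fun m => U m + Complex.I * V m) (fun m => U m + Complex.I * V m))
      - (polcS4 D (fun m => U m - V m) (fun m => U m - V m) Y Y
        + polcS4 D (fun m => U m - V m) Y Y (fun m => U m - V m)
        + polcS4 D Y (fun m => U m - V m) (fun m => U m - V m) Y
        + polcS4 D Y Y (fun m => U m - V m) (fun m => U m - V m))
      - Complex.I * (polcS4 D (fun m => U m - Complex.I * V m) (fun m => U m - Complex.I * V m) Y Y
        + polcS4 D (fun m => U m - Complex.I * V m) Y Y (fun m => U m - Complex.I * V m)
        + polcS4 D Y (fun m => U m - Complex.I * V m) (fun m => U m - Complex.I * V m) Y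
        + polcS4 D Y Y (fun m => U m - Complex.I * V m) (fun m => U m - Complex.I * V m))
      = 4 * (polcS4 D U V Y Y + polcS4 D U Y Y V + polcS4 D Y V U Y + polcS4 D Y Y U V) := by
    simp only [polcS4, Finset.mul_sum, ← Finset.sum_add_distrib, ← Finset.sum_sub_distrib]
    refine Finset.sum_congr rfl fun i _ => ?_
    refine Finset.sum_congr rfl fun j _ => ?_
    refine Finset.sum_congr rfl fun k _ => ?_
    refine Finset.sum_congr rfl fun l _ => ?_
    simp only [map_add, map_mul, map_sub, Complex.conj_I]
    linear_combination (2*(D i j k l * Y k * (starRingEnd ℂ) (Y l))*(V i * (starRingEnd ℂ) (U j) - U i * (starRingEnd ℂ) (V j))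
      + 2*(D i j k l * (starRingEnd ℂ) (Y j) * Y k)*(V i * (starRingEnd ℂ) (U l) - U i * (starRingEnd ℂ) (V l))
      + 2*(D i j k l * Y i * (starRingEnd ℂ) (Y l))*(V k * (starRingEnd ℂ) (U j) - U k * (starRingEnd ℂ) (V j))
      + 2*(D i j k l * Y i * (starRingEnd ℂ) (Y j))*(V k * (starRingEnd ℂ) (U l) - U k * (starRingEnd ℂ) (V l))) * Complex.I_mul_I
  linear_combination (g1 + Complex.I * g2 - g3 - Complex.I * g4 - expand) / 4

private lemma polc_stageC {n : ℕ} (D : Fin n → Fin n → Fin n → Fin n → ℂ)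
    (hB : ∀ U V Y : Fin n → ℂ,
      polcS4 D U V Y Y + polcS4 D U Y Y V + polcS4 D Y V U Y + polcS4 D Y Y U V = 0)
    (U V Z W : Fin n → ℂ) :
    polcS4 D U V Z W + polcS4 D U W Z V + polcS4 D Z V U W + polcS4 D Z W U V = 0 := by
  have g1 := hB U V (fun m => Z m + W m)
  have g2 := hB U V (fun m => Z m + Complex.I * W m)
  have g3 := hB U V (fun m => Z m - W m)
  have g4 := hB U V (fun m => Z m - Complex.I * W m)
  have expand :
      (polcS4 D U V (fun m => Z m + W m) (fun m => Z m + W m)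
        + polcS4 D U (fun m => Z m + W m) (fun m => Z m + W m) V
        + polcS4 D (fun m => Z m + W m) V U (fun m => Z m + W m)
        + polcS4 D (fun m => Z m + W m) (fun m => Z m + W m) U V)
      + Complex.I * (polcS4 D U V (fun m => Z m + Complex.I * W m) (fun m => Z m + Complex.I * W m)
        + polcS4 D U (fun m => Z m + Complex.I * W m) (fun m => Z m + Complex.I * W m) V
        + polcS4 D (fun m => Z m + Complex.I * W m) V U (fun m => Z m + Complex.I * W m)
        + polcS4 D (fun m => Z m + Complex.I * W m) (fun m => Z m + Complex.I * W m) U V)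
      - (polcS4 D U V (fun m => Z m - W m) (fun m => Z m - W m)
        + polcS4 D U (fun m => Z m - W m) (fun m => Z m - W m) V
        + polcS4 D (fun m => Z m - W m) V U (fun m => Z m - W m)
        + polcS4 D (fun m => Z m - W m) (fun m => Z m - W m) U V)
      - Complex.I * (polcS4 D U V (fun m => Z m - Complex.I * W m) (fun m => Z m - Complex.I * W m)
        + polcS4 D U (fun m => Z m - Complex.I * W m) (fun m => Z m - Complex.I * W m) V
        + polcS4 D (fun m => Z m - Complex.I * W m) V U (fun m => Z m - Complex.I * W m)
        + polcS4 D (fun m => Z m - Complex.I * W m) (fun m => Z m - Complex.I * W m) U V)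
      = 4 * (polcS4 D U V Z W + polcS4 D U W Z V + polcS4 D Z V U W + polcS4 D Z W U V) := by
    simp only [polcS4, Finset.mul_sum, ← Finset.sum_add_distrib, ← Finset.sum_sub_distrib]
    refine Finset.sum_congr rfl fun i _ => ?_
    refine Finset.sum_congr rfl fun j _ => ?_
    refine Finset.sum_congr rfl fun k _ => ?_
    refine Finset.sum_congr rfl fun l _ => ?_
    simp only [map_add, map_mul, map_sub, Complex.conj_I]
    linear_combination (2*(D i j k l * U i * (starRingEnd ℂ) (V j))*(W k * (starRingEnd ℂ) (Z l) - Z k * (starRingEnd ℂ) (W l))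
      + 2*(D i j k l * U i * (starRingEnd ℂ) (V l))*(W k * (starRingEnd ℂ) (Z j) - Z k * (starRingEnd ℂ) (W j))
      + 2*(D i j k l * U k * (starRingEnd ℂ) (V j))*(W i * (starRingEnd ℂ) (Z l) - Z i * (starRingEnd ℂ) (W l))
      + 2*(D i j k l * U k * (starRingEnd ℂ) (V l))*(W i * (starRingEnd ℂ) (Z j) - Z i * (starRingEnd ℂ) (W j))) * Complex.I_mul_I
  linear_combination (g1 + Complex.I * g2 - g3 - Complex.I * g4 - expand) / 4

private lemma polc_key {n : ℕ} (D : Fin n → Fin n → Fin n → Fin n → ℂ)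
    (h0 : ∀ X : Fin n → ℂ, polcS4 D X X X X = 0) (a b c d : Fin n) :
    D a b c d + D a d c b + D c b a d + D c d a b = 0 := by
  have hC := polc_stageC D (polc_stageB D (polc_stageA D h0))
    (fun m => if m = a then (1:ℂ) else 0) (fun m => if m = b then (1:ℂ) else 0)
    (fun m => if m = c then (1:ℂ) else 0) (fun m => if m = d then (1:ℂ) else 0)
  rwa [polcS4_basis, polcS4_basis, polcS4_basis, polcS4_basis] at hC

private lemma polc_target_sum {n : ℕ} (c : ℝ) (X : Fin n → ℂ) :
    polcS4 (fun i j k l => ((c:ℂ)/2) * ((if i = j then 1 else 0) * (if k = l then 1 else 0) +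
        (if i = l then 1 else 0) * (if k = j then 1 else 0))) X X X X
      = (c : ℂ) * ((∑ i, Complex.normSq (X i) : ℝ) : ℂ) ^ 2 := by
  have hP : ((∑ i, Complex.normSq (X i) : ℝ) : ℂ) = ∑ i, X i * (starRingEnd ℂ) (X i) := by
    push_cast
    simp [Complex.mul_conj]
  rw [hP]
  simp only [polcS4, mul_ite, ite_mul, mul_one, mul_zero, one_mul, zero_mul, add_mul, mul_add,
    Finset.sum_add_distrib, Finset.sum_ite_eq, Finset.sum_ite_eq', Finset.mem_univ, if_true,
    zero_add, add_zero, Finset.sum_ite_irrel, Finset.sum_const_zero]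
  rw [sq, Finset.sum_mul_sum]
  simp only [Finset.mul_sum, ← Finset.sum_add_distrib]
  refine Finset.sum_congr rfl fun i _ => ?_
  refine Finset.sum_congr rfl fun j _ => ?_
  ring

/-- Polarization lemma: a tensor with the symmetries of a symmetrized curvature tensor whose
holomorphic sectional curvature is the constant c equals (c/2)(δ_{ij}δ_{kℓ} + δ_{iℓ}δ_{kj}). -/
theorem polarization_constant_hsc (n : ℕ) (hn : 1 ≤ n)
    (R : Fin n → Fin n → Fin n → Fin n → ℂ)
    (hsym1 : ∀ i j k l, R i j k l = R k j i l)
    (hsym2 : ∀ i j k l, R i j k l = R i l k j)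
    (hsym3 : ∀ i j k l, R i j k l = (starRingEnd ℂ) (R j i l k))
    (c : ℝ)
    (hH : ∀ X : Fin n → ℂ,
      ∑ i, ∑ j, ∑ k, ∑ l,
        R i j k l * X i * (starRingEnd ℂ) (X j) * X k * (starRingEnd ℂ) (X l) =
        (c : ℂ) * ((∑ i, Complex.normSq (X i) : ℝ) : ℂ) ^ 2) :
    ∀ i j k l, R i j k l =
      ((c : ℂ) / 2) * ((if i = j then 1 else 0) * (if k = l then 1 else 0) +
        (if i = l then 1 else 0) * (if k = j then 1 else 0)) := by
  intro i j k l
  set D : Fin n → Fin n → Fin n → Fin n → ℂ := fun i j k l =>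
    R i j k l - ((c:ℂ)/2) * ((if i = j then 1 else 0) * (if k = l then 1 else 0) +
      (if i = l then 1 else 0) * (if k = j then 1 else 0)) with hD
  have h0 : ∀ X : Fin n → ℂ, polcS4 D X X X X = 0 := by
    intro X
    have h1 : polcS4 D X X X X = polcS4 R X X X X
        - polcS4 (fun i j k l => ((c:ℂ)/2) * ((if i = j then 1 else 0) * (if k = l then 1 else 0) +
            (if i = l then 1 else 0) * (if k = j then 1 else 0))) X X X X := by
      simp only [polcS4, hD, sub_mul, Finset.sum_sub_distrib]
    have h2 : polcS4 R X X X X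
        = (c : ℂ) * ((∑ i, Complex.normSq (X i) : ℝ) : ℂ) ^ 2 := hH X
    rw [h1, h2, polc_target_sum, sub_self]
  have h := polc_key D h0 i j k l
  simp only [hD] at h
  have e1 := hsym2 i j k l
  have e2 := hsym1 i j k l
  have e3 : R i j k l = R k l i j := by rw [hsym1 i j k l, hsym2 k j i l]
  linear_combination h / 4 + (e1 + e2 + e3) / 4
end

section
/- Let n ≥ 1, z ∈ ℂⁿ with z ≠ 0, and define T : (Fin n)³ → ℂ by T(j,i,k) = (conj(z_k)·δ_{ij} - conj(z_i)·δ_{kj})/|z|, where |z| = (Σ_i |z_i|²)^{1/2}. Then for all i,j,k,ℓ: Σ_r T(j,i,r)·conj(T(k,ℓ,r)) = δ_{ij}·δ_{kℓ} + (conj(z_i)·z_ℓ·δ_{kj} - conj(z_i)·z_j·δ_{kℓ} - conj(z_k)·z_ℓ·δ_{ij})/|z|². -/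
open Complex

set_option maxHeartbeats 1000000

/-- For the Chern torsion T^j_{ik} = (conj(z_k)δ_{ij} - conj(z_i)δ_{kj})/|z| of the standard
Hopf manifold, the quantity v^j_i = Σ_r T^j_{ir}·conj(T^k_{ℓr}) is as displayed. -/
theorem hopf_torsion_v (n : ℕ) (hn : 1 ≤ n) (z : Fin n → ℂ) (hz : z ≠ 0)
    (T : Fin n → Fin n → Fin n → ℂ)
    (hT : ∀ j i k, T j i k =
      ((starRingEnd ℂ) (z k) * (if i = j then 1 else 0) -
        (starRingEnd ℂ) (z i) * (if k = j then 1 else 0)) /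
        ((Real.sqrt (∑ r, Complex.normSq (z r)) : ℝ) : ℂ)) :
    ∀ i j k l, ∑ r, T j i r * (starRingEnd ℂ) (T k l r) =
      (if i = j then 1 else 0) * (if k = l then 1 else 0) +
      ((starRingEnd ℂ) (z i) * z l * (if k = j then 1 else 0) -
       (starRingEnd ℂ) (z i) * z j * (if k = l then 1 else 0) -
       (starRingEnd ℂ) (z k) * z l * (if i = j then 1 else 0)) /
        (((∑ r, Complex.normSq (z r) : ℝ)) : ℂ) := by
  intro i j k l
  have hex : ∃ r, z r ≠ 0 := by
    by_contra h; push_neg at h; exact hz (funext h)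
  obtain ⟨r0, hr0⟩ := hex
  have hs : (0:ℝ) < ∑ r, Complex.normSq (z r) :=
    Finset.sum_pos' (fun _ _ => Complex.normSq_nonneg _)
      ⟨r0, Finset.mem_univ _, Complex.normSq_pos.mpr hr0⟩
  have hsC : ((∑ r, Complex.normSq (z r) : ℝ) : ℂ) ≠ 0 := by
    exact_mod_cast hs.ne'
  have hsq : ((Real.sqrt (∑ r, Complex.normSq (z r)) : ℝ) : ℂ) *
      ((Real.sqrt (∑ r, Complex.normSq (z r)) : ℝ) : ℂ) =
      ((∑ r, Complex.normSq (z r) : ℝ) : ℂ) := by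
    rw [← Complex.ofReal_mul, Real.mul_self_sqrt hs.le]
  have key : ∑ r, (starRingEnd ℂ) (z r) * z r = ((∑ r, Complex.normSq (z r) : ℝ) : ℂ) := by
    push_cast
    refine Finset.sum_congr rfl fun r _ => ?_
    rw [mul_comm, Complex.mul_conj]
  simp only [hT, map_div₀, map_sub, map_mul, Complex.conj_conj, Complex.conj_ofReal,
    apply_ite (starRingEnd ℂ), map_one, map_zero, div_mul_div_comm, hsq]
  rw [← Finset.sum_div, div_eq_iff hsC, add_mul, div_mul_cancel₀ _ hsC]
  simp only [sub_mul, mul_sub, Finset.sum_sub_distrib, mul_ite, ite_mul, mul_one, one_mul,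
    mul_zero, zero_mul, Finset.sum_ite_eq, Finset.sum_ite_eq', Finset.mem_univ, if_true]
  obtain hij | hij := eq_or_ne i j <;> obtain hkj | hkj := eq_or_ne k j <;>
    obtain hkl | hkl := eq_or_ne k l <;> obtain hjl | hjl := eq_or_ne j l <;>
    simp [hij, hkj, hkl, hjl, eq_comm, Finset.sum_sub_distrib, key] <;>
    ring
end

section
/- Let n ≥ 1, z ∈ ℂⁿ with z ≠ 0, and set v(j,i,k,ℓ) = δ_{ij}·δ_{kℓ} + (conj(z_i)·z_ℓ·δ_{kj} - conj(z_i)·z_j·δ_{kℓ} - conj(z_k)·z_ℓ·δ_{ij})/|z|² and R(i,j,k,ℓ) = δ_{ij}·δ_{kℓ} - conj(z_i)·z_j·δ_{kℓ}/|z|². Then the symmetrizations agree: for all i,j,k,ℓ, (1/4)·(v(j,i,k,ℓ) + v(ℓ,k,i,j)' + v(ℓ,i,k,j)' + v(j,k,i,ℓ)') equals (1/4)·(R(i,j,k,ℓ) + R(k,j,i,ℓ) + R(i,ℓ,k,j) + R(k,ℓ,i,j)), where the four v-terms are v^j_i, v^ℓ_k, v^ℓ_i, v^j_k obtained from the formula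 by the corresponding index substitutions; explicitly both sides equal (1/2)·(δ_{ij}δ_{kℓ} + δ_{iℓ}δ_{kj}) - (1/(4|z|²))·(conj(z_i)z_j·δ_{kℓ} + conj(z_k)z_ℓ·δ_{ij} + conj(z_i)z_ℓ·δ_{kj} + conj(z_k)z_j·δ_{iℓ}). -/
open Complex

/-- For the standard Hopf manifold, the symmetrization v̂ of v^j_i equals the symmetrization
R̂^c of the Chern curvature, and both equal the displayed explicit expression. -/
theorem hopf_vhat_eq_Rchat (n : ℕ) (hn : 1 ≤ n) (z : Fin n → ℂ) (hz : z ≠ 0)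
    (v : Fin n → Fin n → Fin n → Fin n → ℂ)
    (hv : ∀ i j k l, v i j k l =
      (if i = j then 1 else 0) * (if k = l then 1 else 0) +
      ((starRingEnd ℂ) (z i) * z l * (if k = j then 1 else 0) -
       (starRingEnd ℂ) (z i) * z j * (if k = l then 1 else 0) -
       (starRingEnd ℂ) (z k) * z l * (if i = j then 1 else 0)) /
        (((∑ r, Complex.normSq (z r) : ℝ)) : ℂ))
    (R : Fin n → Fin n → Fin n → Fin n → ℂ)
    (hR : ∀ i j k l, R i j k l =
      (if i = j then 1 else 0) * (if k = l then 1 else 0) -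
      (starRingEnd ℂ) (z i) * z j * (if k = l then 1 else 0) /
        (((∑ r, Complex.normSq (z r) : ℝ)) : ℂ)) :
    ∀ i j k l,
      (1 / 4 : ℂ) * (v i j k l + v k l i j + v i l k j + v k j i l) =
        (1 / 4 : ℂ) * (R i j k l + R k j i l + R i l k j + R k l i j) ∧
      (1 / 4 : ℂ) * (v i j k l + v k l i j + v i l k j + v k j i l) =
        (1 / 2 : ℂ) * ((if i = j then 1 else 0) * (if k = l then 1 else 0) +
          (if i = l then 1 else 0) * (if k = j then 1 else 0)) -
        (1 / (4 * (((∑ r, Complex.normSq (z r) : ℝ)) : ℂ))) *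
          ((starRingEnd ℂ) (z i) * z j * (if k = l then 1 else 0) +
           (starRingEnd ℂ) (z k) * z l * (if i = j then 1 else 0) +
           (starRingEnd ℂ) (z i) * z l * (if k = j then 1 else 0) +
           (starRingEnd ℂ) (z k) * z j * (if i = l then 1 else 0)) := by
  have hS : ((∑ r, Complex.normSq (z r) : ℝ) : ℂ) ≠ 0 := by
    have h1 : 0 < ∑ r, Complex.normSq (z r) := by
      obtain ⟨r, hr⟩ : ∃ r, z r ≠ 0 := by
        by_contra h
        push_neg at h
        exact hz (funext h)
      exact Finset.sum_pos' (fun r _ => Complex.normSq_nonneg _)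
        ⟨r, Finset.mem_univ r, Complex.normSq_pos.mpr hr⟩
    exact Complex.ofReal_ne_zero.mpr (ne_of_gt h1)
  intro i j k l
  simp only [hv, hR]
  generalize hSdef : ((∑ r, Complex.normSq (z r) : ℝ) : ℂ) = S at hS ⊢
  constructor <;> ring
end

section
/- The set of (t,s) ∈ ℝ² satisfying t² - s²/4 - 2t + 1 = 0 and t - t² = 0 is exactly {(1,0), (0,2), (0,-2)}. Consequently, the set of (r,s) ∈ ℝ² with t = (1 - r + r·s)/2 satisfying these two equations is exactly {(-1,0), (-1,2), (1/3,-2)}. -/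
/-- The solutions of t² - s²/4 - 2t + 1 = 0, t - t² = 0 are exactly (1,0), (0,2), (0,-2);
consequently in the (r,s)-parameters with t = (1-r+rs)/2 the solutions are exactly
(-1,0), (-1,2), (1/3,-2). -/
theorem hopf_surface_flat_solutions :
    ({p : ℝ × ℝ | p.1 ^ 2 - p.2 ^ 2 / 4 - 2 * p.1 + 1 = 0 ∧ p.1 - p.1 ^ 2 = 0} =
      {((1 : ℝ), (0 : ℝ)), ((0 : ℝ), (2 : ℝ)), ((0 : ℝ), (-2 : ℝ))}) ∧
    ({p : ℝ × ℝ |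
        ((1 - p.1 + p.1 * p.2) / 2) ^ 2 - p.2 ^ 2 / 4 - 2 * ((1 - p.1 + p.1 * p.2) / 2) + 1 = 0 ∧
        (1 - p.1 + p.1 * p.2) / 2 - ((1 - p.1 + p.1 * p.2) / 2) ^ 2 = 0} =
      {((-1 : ℝ), (0 : ℝ)), ((-1 : ℝ), (2 : ℝ)), ((1 / 3 : ℝ), (-2 : ℝ))}) := by
  constructor
  · ext ⟨t, s⟩
    simp only [Set.mem_setOf_eq, Set.mem_insert_iff, Set.mem_singleton_iff, Prod.mk.injEq]
    constructor
    · rintro ⟨h1, h2⟩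
      have ht : t * (1 - t) = 0 := by ring_nf; linarith [h2]
      rcases mul_eq_zero.1 ht with ht0 | ht1
      · have hs : (s - 2) * (s + 2) = 0 := by nlinarith
        rcases mul_eq_zero.1 hs with hs1 | hs2
        · exact Or.inr (Or.inl ⟨ht0, by linarith⟩)
        · exact Or.inr (Or.inr ⟨ht0, by linarith⟩)
      · left
        constructor
        · linarith
        · nlinarith
    · rintro (⟨h1, h2⟩ | ⟨h1, h2⟩ | ⟨h1, h2⟩) <;> subst h1 <;> subst h2 <;> norm_num
  · ext ⟨r, s⟩
    simp only [Set.mem_setOf_eq, Set.mem_insert_iff, Set.mem_singleton_iff, Prod.mk.injEq]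
    constructor
    · rintro ⟨h1, h2⟩
      set u : ℝ := (1 - r + r * s) / 2 with hu
      have hufact : u * (1 - u) = 0 := by ring_nf; ring_nf at h2; linarith
      rcases mul_eq_zero.1 hufact with ht0 | ht1
      · have hs : (s - 2) * (s + 2) = 0 := by nlinarith
        have huz : 1 - r + r * s = 0 := by
          have : (1 - r + r * s) / 2 = 0 := ht0
          linarith
        rcases mul_eq_zero.1 hs with hs1 | hs2
        · right; left
          constructor
          · nlinarith
          · linarith
        · right; right
          constructor
          · nlinarith
          · linarith
      · have hu1 : u = 1 := by linarith
        have hs0 : s = 0 := by nlinarith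
        left
        constructor
        · have : (1 - r + r * s) / 2 = 1 := hu1
          nlinarith
        · exact hs0
    · rintro (⟨h1, h2⟩ | ⟨h1, h2⟩ | ⟨h1, h2⟩) <;> subst h1 <;> subst h2 <;> norm_num
end
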